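/- arXiv:1307.3969 — 4 statements merged into one kernel-verified Lean document; each statement's English description precedes it below -/
import Mathlib

section
/- Let m ≥ 2, 0 ≤ s ≤ m, let I, J ⊆ ℝ be open intervals, and let L : I × J → ℝ^m be a smooth map satisfying ⟨∂L/∂x, ∂L/∂x⟩_s = 0, ⟨∂L/∂y, ∂L/∂y⟩_s = 0, and ⟨∂L/∂x, ∂L/∂y⟩_s ≠ 0 at every point of I × J. Suppose that at every point p ∈ I × J the vector ∂²L/∂x∂y(p) lies in the linear span of ∂L/∂x(p) and ∂L/∂y(p) (i.e., the mean curvature vector of the Lorentz surface vanishes, so L is a minimal immersion). Then there exist smooth curves z : I → ℝ^m and w : J → ℝ^m with ⟨z'(x), z'(x)⟩_s = 0 for all x ∈ I, ⟨w'(y), w'(y)⟩_s = 0 for all y ∈ J, and ⟨z'(x), w'(y)⟩_s ≠ 0 for all (x,y) ∈ I × J, such that L(x,y) = z(x) + w(y). (This is the 'only if' direction of Theorem 4.1.) -/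
noncomputable def pform (s n : ℕ) (u v : Fin n → ℝ) : ℝ :=
  ∑ i : Fin n, (if (i : ℕ) < s then -(u i * v i) else u i * v i)

noncomputable def pd1 {E : Type*} [NormedAddCommGroup E] [NormedSpace ℝ E]
    (L : ℝ → ℝ → E) (x y : ℝ) : E :=
  deriv (fun t => L t y) x

noncomputable def pd2 {E : Type*} [NormedAddCommGroup E] [NormedSpace ℝ E]
    (L : ℝ → ℝ → E) (x y : ℝ) : E :=
  deriv (fun t => L x t) y

open Filter Topology

lemma pform_eq (s n : ℕ) (u v : Fin n → ℝ) :
    pform s n u v = ∑ i : Fin n, (if (i : ℕ) < s then (-1 : ℝ) else 1) * (u i * v i) := by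
  unfold pform; refine Finset.sum_congr rfl fun i _ => ?_; split <;> ring

lemma pform_comm (s n : ℕ) (u v : Fin n → ℝ) : pform s n u v = pform s n v u := by
  unfold pform; refine Finset.sum_congr rfl fun i _ => ?_; split <;> ring

lemma pform_smul_add (s n : ℕ) (α β : ℝ) (u v w : Fin n → ℝ) :
    pform s n (α • u + β • v) w = α * pform s n u w + β * pform s n v w := by
  simp only [pform_eq, Finset.mul_sum, ← Finset.sum_add_distrib, Pi.add_apply, Pi.smul_apply,
    smul_eq_mul]
  refine Finset.sum_congr rfl fun i _ => by ring

lemma pform_zero_right (s n : ℕ) (u : Fin n → ℝ) : pform s n u 0 = 0 := by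
  simp [pform_eq]

lemma hasDerivAt_pform {s n : ℕ} {f g : ℝ → Fin n → ℝ} {f' g' : Fin n → ℝ} {t : ℝ}
    (hf : HasDerivAt f f' t) (hg : HasDerivAt g g' t) :
    HasDerivAt (fun t => pform s n (f t) (g t))
      (pform s n f' (g t) + pform s n (f t) g') t := by
  have h : ∀ i : Fin n,
      HasDerivAt (fun t => (if (i : ℕ) < s then (-1 : ℝ) else 1) * (f t i * g t i))
        ((if (i : ℕ) < s then (-1 : ℝ) else 1) * (f' i * g t i + f t i * g' i)) t := fun i =>
    ((hasDerivAt_pi.1 hf i).mul (hasDerivAt_pi.1 hg i)).const_mul _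
  have hsum := HasDerivAt.fun_sum (u := Finset.univ) (fun i _ => h i)
  have hfun : (fun t => pform s n (f t) (g t)) =
      fun t => ∑ i : Fin n, (if (i : ℕ) < s then (-1 : ℝ) else 1) * (f t i * g t i) := by
    funext t; exact pform_eq s n (f t) (g t)
  rw [hfun]
  convert hsum using 1
  · rfl
  · rfl
  rw [pform_eq, pform_eq, ← Finset.sum_add_distrib]
  refine Finset.sum_congr rfl fun i _ => by ring

theorem stmt_3 (m s : ℕ) (hm : 2 ≤ m) (hs : s ≤ m) (I J : Set ℝ)
    (hIo : IsOpen I) (hIc : I.OrdConnected) (hJo : IsOpen J) (hJc : J.OrdConnected)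
    (L : ℝ → ℝ → Fin m → ℝ)
    (hL : ContDiffOn ℝ (⊤ : ℕ∞) (fun p : ℝ × ℝ => L p.1 p.2) (I ×ˢ J))
    (h1 : ∀ x ∈ I, ∀ y ∈ J, pform s m (pd1 L x y) (pd1 L x y) = 0)
    (h2 : ∀ x ∈ I, ∀ y ∈ J, pform s m (pd2 L x y) (pd2 L x y) = 0)
    (h3 : ∀ x ∈ I, ∀ y ∈ J, pform s m (pd1 L x y) (pd2 L x y) ≠ 0)
    (hmin : ∀ x ∈ I, ∀ y ∈ J,
      pd1 (pd2 L) x y ∈ Submodule.span ℝ ({pd1 L x y, pd2 L x y} : Set (Fin m → ℝ))) :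
    ∃ z w : ℝ → Fin m → ℝ, ContDiffOn ℝ (⊤ : ℕ∞) z I ∧ ContDiffOn ℝ (⊤ : ℕ∞) w J ∧
      (∀ x ∈ I, pform s m (deriv z x) (deriv z x) = 0) ∧
      (∀ y ∈ J, pform s m (deriv w y) (deriv w y) = 0) ∧
      (∀ x ∈ I, ∀ y ∈ J, pform s m (deriv z x) (deriv w y) ≠ 0) ∧
      (∀ x ∈ I, ∀ y ∈ J, L x y = z x + w y) := by
  classical
  have htriv : ∀ t : ℝ, pform s m (deriv (0 : ℝ → Fin m → ℝ) t) (deriv (0 : ℝ → Fin m → ℝ) t) = 0 := by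
    intro t
    have : deriv (0 : ℝ → Fin m → ℝ) t = 0 := by
      show deriv (fun _ : ℝ => (0 : Fin m → ℝ)) t = 0
      exact deriv_const t 0
    rw [this]; exact pform_zero_right s m 0
  rcases Set.eq_empty_or_nonempty I with hIe | ⟨x0, hx0⟩
  · exact ⟨0, 0, contDiffOn_const, contDiffOn_const,
      by simp [hIe], fun y _ => htriv y, by simp [hIe], by simp [hIe]⟩
  rcases Set.eq_empty_or_nonempty J with hJe | ⟨y0, hy0⟩
  · exact ⟨0, 0, contDiffOn_const, contDiffOn_const,
      fun x _ => htriv x, by simp [hJe], by simp [hJe], by simp [hJe]⟩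
  set U : Set (ℝ × ℝ) := I ×ˢ J with hUdef
  have hUo : IsOpen U := hIo.prod hJo
  set F : ℝ × ℝ → (Fin m → ℝ) := fun p => L p.1 p.2 with hFdef
  have hFd : ∀ p ∈ U, HasFDerivAt F (fderiv ℝ F p) p := fun p hp =>
    ((hL.contDiffAt (hUo.mem_nhds hp)).differentiableAt (by simp)).hasFDerivAt
  set A : ℝ × ℝ → (Fin m → ℝ) := fun p => fderiv ℝ F p (1, 0) with hAdef
  set B : ℝ × ℝ → (Fin m → ℝ) := fun p => fderiv ℝ F p (0, 1) with hBdef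
  -- first partial derivatives as HasDerivAt
  have hAd : ∀ p ∈ U, HasDerivAt (fun t => L t p.2) (A p) p.1 := by
    intro p hp
    have := (hFd p hp).comp_hasDerivAt (f := fun t : ℝ => (t, p.2)) (x := p.1)
      ((hasDerivAt_id p.1).prodMk (hasDerivAt_const p.1 p.2))
    exact this
  have hBd : ∀ p ∈ U, HasDerivAt (fun t => L p.1 t) (B p) p.2 := by
    intro p hp
    have := (hFd p hp).comp_hasDerivAt (f := fun t : ℝ => (p.1, t)) (x := p.2)
      ((hasDerivAt_const p.2 p.1).prodMk (hasDerivAt_id p.2))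
    exact this
  have hA1 : ∀ p ∈ U, pd1 L p.1 p.2 = A p := fun p hp => (hAd p hp).deriv
  have hB1 : ∀ p ∈ U, pd2 L p.1 p.2 = B p := fun p hp => (hBd p hp).deriv
  -- second derivative
  have hF' : ContDiffOn ℝ (⊤ : ℕ∞) (fun p => fderiv ℝ F p) U := hL.fderiv_of_isOpen hUo (by simp)
  have hF'd : ∀ p ∈ U, HasFDerivAt (fderiv ℝ F) (fderiv ℝ (fderiv ℝ F) p) p := fun p hp =>
    ((hF'.contDiffAt (hUo.mem_nhds hp)).differentiableAt (by simp)).hasFDerivAt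
  have hsymm : ∀ p ∈ U,
      fderiv ℝ (fderiv ℝ F) p ((1 : ℝ), (0 : ℝ)) (0, 1)
        = fderiv ℝ (fderiv ℝ F) p (0, 1) (1, 0) := by
    intro p hp
    have hev : ∀ᶠ q in 𝓝 p, HasFDerivAt F (fderiv ℝ F q) q :=
      eventually_of_mem (hUo.mem_nhds hp) (fun q hq => hFd q hq)
    exact second_derivative_symmetric_of_eventually hev (hF'd p hp) _ _
  have hBx : ∀ p ∈ U, HasDerivAt (fun t => B (t, p.2))
      (fderiv ℝ (fderiv ℝ F) p (1, 0) (0, 1)) p.1 := by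
    intro p hp
    have h1' : HasDerivAt (fun t : ℝ => fderiv ℝ F (t, p.2))
        (fderiv ℝ (fderiv ℝ F) p (1, 0)) p.1 :=
      (hF'd p hp).comp_hasDerivAt (f := fun t : ℝ => (t, p.2)) (x := p.1)
        ((hasDerivAt_id p.1).prodMk (hasDerivAt_const p.1 p.2))
    have h2' := h1'.clm_apply (hasDerivAt_const p.1 ((0 : ℝ), (1 : ℝ)))
    simpa using h2'
  have hAy : ∀ p ∈ U, HasDerivAt (fun t => A (p.1, t))
      (fderiv ℝ (fderiv ℝ F) p (0, 1) (1, 0)) p.2 := by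
    intro p hp
    have h1' : HasDerivAt (fun t : ℝ => fderiv ℝ F (p.1, t))
        (fderiv ℝ (fderiv ℝ F) p (0, 1)) p.2 :=
      (hF'd p hp).comp_hasDerivAt (f := fun t : ℝ => (p.1, t)) (x := p.2)
        ((hasDerivAt_const p.2 p.1).prodMk (hasDerivAt_id p.2))
    have h2' := h1'.clm_apply (hasDerivAt_const p.2 ((1 : ℝ), (0 : ℝ)))
    simpa using h2'
  -- minimality forces the mixed derivative to vanish
  have hc0 : ∀ p ∈ U, fderiv ℝ (fderiv ℝ F) p ((1 : ℝ), (0 : ℝ)) (0, 1) = 0 := by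
    rintro ⟨x, y⟩ hp
    have hx : x ∈ I := hp.1
    have hy : y ∈ J := hp.2
    set c := fderiv ℝ (fderiv ℝ F) (x, y) ((1 : ℝ), (0 : ℝ)) (0, 1) with hcdef
    have hca : pform s m c (A (x, y)) = 0 := by
      have hder := hasDerivAt_pform (s := s) (hAy (x, y) hp) (hAy (x, y) hp)
      have hev : (fun t => pform s m (A (x, t)) (A (x, t))) =ᶠ[𝓝 y] fun _ => 0 := by
        filter_upwards [hJo.mem_nhds hy] with t ht
        rw [← hA1 (x, t) ⟨hx, ht⟩]
        exact h1 x hx t ht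
      have h0 : HasDerivAt (fun t => pform s m (A (x, t)) (A (x, t))) 0 y :=
        (hasDerivAt_const y (0 : ℝ)).congr_of_eventuallyEq hev
      have huniq := h0.unique hder
      have hcomm := pform_comm s m (A (x, y)) (fderiv ℝ (fderiv ℝ F) (x, y) (0, 1) (1, 0))
      rw [hcdef, hsymm (x, y) hp]
      linarith [huniq, hcomm]
    have hcb : pform s m c (B (x, y)) = 0 := by
      have hder := hasDerivAt_pform (s := s) (hBx (x, y) hp) (hBx (x, y) hp)
      have hev : (fun t => pform s m (B (t, y)) (B (t, y))) =ᶠ[𝓝 x] fun _ => 0 := by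
        filter_upwards [hIo.mem_nhds hx] with t ht
        rw [← hB1 (t, y) ⟨ht, hy⟩]
        exact h2 t ht y hy
      have h0 : HasDerivAt (fun t => pform s m (B (t, y)) (B (t, y))) 0 x :=
        (hasDerivAt_const x (0 : ℝ)).congr_of_eventuallyEq hev
      have huniq := h0.unique hder
      have hcomm := pform_comm s m (B (x, y)) c
      rw [hcdef]
      linarith [huniq, hcomm]
    have hpd : pd1 (pd2 L) x y = c := by
      have hev : (fun t => pd2 L t y) =ᶠ[𝓝 x] fun t => B (t, y) := by
        filter_upwards [hIo.mem_nhds hx] with t ht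
        exact hB1 (t, y) ⟨ht, hy⟩
      calc pd1 (pd2 L) x y = deriv (fun t => B (t, y)) x := hev.deriv_eq
        _ = c := (hBx (x, y) hp).deriv
    have hm' := hmin x hx y hy
    rw [hpd, show pd1 L x y = A (x, y) from hA1 (x, y) hp,
      show pd2 L x y = B (x, y) from hB1 (x, y) hp] at hm'
    obtain ⟨α, β, hαβ⟩ := Submodule.mem_span_pair.1 hm'
    have haa : pform s m (A (x, y)) (A (x, y)) = 0 := by
      rw [← hA1 (x, y) hp]; exact h1 x hx y hy
    have hbb : pform s m (B (x, y)) (B (x, y)) = 0 := by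
      rw [← hB1 (x, y) hp]; exact h2 x hx y hy
    have hab : pform s m (A (x, y)) (B (x, y)) ≠ 0 := by
      rw [← hA1 (x, y) hp, ← hB1 (x, y) hp]; exact h3 x hx y hy
    have e1 : pform s m c (A (x, y)) = β * pform s m (B (x, y)) (A (x, y)) := by
      rw [← hαβ, pform_smul_add, haa]; ring
    have e2 : pform s m c (B (x, y)) = α * pform s m (A (x, y)) (B (x, y)) := by
      rw [← hαβ, pform_smul_add, hbb]; ring
    have hβ : β = 0 := by
      have hba : pform s m (B (x, y)) (A (x, y)) ≠ 0 := by
        rw [pform_comm]; exact hab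
      have := e1 ▸ hca
      exact (mul_eq_zero.1 (by linarith [e1, hca] : β * pform s m (B (x, y)) (A (x, y)) = 0)).resolve_right hba
    have hα : α = 0 := by
      have := e2 ▸ hcb
      exact (mul_eq_zero.1 (by linarith [e2, hcb] : α * pform s m (A (x, y)) (B (x, y)) = 0)).resolve_right hab
    rw [hα, hβ] at hαβ
    simpa using hαβ.symm
  have hconvI : Convex ℝ I := convex_iff_ordConnected.2 hIc
  have hconvJ : Convex ℝ J := convex_iff_ordConnected.2 hJc
  -- B is constant in the first variable
  have hBzero : ∀ p ∈ U, HasDerivAt (fun t => B (t, p.2)) 0 p.1 := by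
    intro p hp
    have := hBx p hp
    rwa [hc0 p hp] at this
  have smulRight_zero : (ContinuousLinearMap.smulRight (1 : ℝ →L[ℝ] ℝ) (0 : Fin m → ℝ)) = 0 :=
    ContinuousLinearMap.ext fun x => by simp
  have hBconst : ∀ y ∈ J, ∀ x ∈ I, B (x, y) = B (x0, y) := by
    intro y hy x hx
    have hdiff : DifferentiableOn ℝ (fun t => B (t, y)) I := fun t ht =>
      (hBzero (t, y) ⟨ht, hy⟩).differentiableAt.differentiableWithinAt
    refine hconvI.is_const_of_fderivWithin_eq_zero hdiff ?_ hx hx0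
    intro t ht
    rw [fderivWithin_of_isOpen hIo ht]
    have h0 := (hBzero (t, y) ⟨ht, hy⟩).hasFDerivAt
    rw [ContinuousLinearMap.toSpanSingleton_zero] at h0
    exact h0.fderiv
  -- splitting of L
  have hLsplit : ∀ x ∈ I, ∀ y ∈ J, L x y = (L x y0 - L x0 y0) + L x0 y := by
    intro x hx y hy
    have key : L x y - L x0 y = L x y0 - L x0 y0 := by
      have hder : ∀ t ∈ J, HasDerivAt (fun t => L x t - L x0 t) 0 t := by
        intro t ht
        have h0 := (hBd (x, t) ⟨hx, ht⟩).sub (hBd (x0, t) ⟨hx0, ht⟩)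
        rwa [hBconst t ht x hx, sub_self] at h0
      have hdiff : DifferentiableOn ℝ (fun t => L x t - L x0 t) J := fun t ht =>
        (hder t ht).differentiableAt.differentiableWithinAt
      refine hconvJ.is_const_of_fderivWithin_eq_zero hdiff ?_ hy hy0
      intro t ht
      rw [fderivWithin_of_isOpen hJo ht]
      have h0 := (hder t ht).hasFDerivAt
      rw [ContinuousLinearMap.toSpanSingleton_zero] at h0
      exact h0.fderiv
    have := key
    abel_nf at this ⊢
    linear_combination (norm := abel_nf) this
  set z : ℝ → Fin m → ℝ := fun x => L x y0 - L x0 y0 with hzdef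
  set w : ℝ → Fin m → ℝ := fun y => L x0 y with hwdef
  have hzderiv : ∀ x, deriv z x = pd1 L x y0 := by
    intro x
    have : deriv z x = deriv (fun t => L t y0) x := deriv_sub_const _
    rw [this]; rfl
  have hwderiv : ∀ y, deriv w y = pd2 L x0 y := fun y => rfl
  have hzc : ContDiffOn ℝ (⊤ : ℕ∞) z I := by
    have hcomp : ContDiffOn ℝ (⊤ : ℕ∞) (fun x : ℝ => L x y0) I := by
      have := hL.comp (f := fun x : ℝ => (x, y0)) (contDiff_id.prodMk contDiff_const).contDiffOn
        (fun x hx => ⟨hx, hy0⟩)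
      exact this
    exact hcomp.sub contDiffOn_const
  have hwc : ContDiffOn ℝ (⊤ : ℕ∞) w J := by
    have := hL.comp (f := fun y : ℝ => (x0, y)) (contDiff_const.prodMk contDiff_id).contDiffOn
      (fun y hy => ⟨hx0, hy⟩)
    exact this
  refine ⟨z, w, hzc, hwc, ?_, ?_, ?_, ?_⟩
  · intro x hx
    rw [hzderiv]; exact h1 x hx y0 hy0
  · intro y hy
    rw [hwderiv]; exact h2 x0 hx0 y hy
  · intro x hx y hy
    have ez : deriv z x = pd1 L x y := by
      have hev : (fun t => L t y) =ᶠ[𝓝 x] fun t => z t + w y := by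
        filter_upwards [hIo.mem_nhds hx] with t ht
        exact hLsplit t ht y hy
      have : pd1 L x y = deriv (fun t => z t + w y) x := hev.deriv_eq
      rw [this, deriv_add_const]
    have ew : deriv w y = pd2 L x y := by
      have hev : (fun t => L x t) =ᶠ[𝓝 y] fun t => z x + w t := by
        filter_upwards [hJo.mem_nhds hy] with t ht
        exact hLsplit x hx t ht
      have : pd2 L x y = deriv (fun t => z x + w t) y := hev.deriv_eq
      rw [this, deriv_const_add]
    rw [ez, ew]; exact h3 x hx y hy
  · intro x hx y hy
    exact hLsplit x hx y hy
end

section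
/- Let m ≥ 1, let I, J ⊆ ℝ be open intervals with x + y > 0 for all x ∈ I, y ∈ J, and let L : I × J → ℝ^{m+1} be a smooth map satisfying the partial differential equations ∂²L/∂y² = −(2/(x+y)) ∂L/∂y and ∂²L/∂x∂y = (2/(x+y)²) L on I × J. Then there exists a smooth curve z : I → ℝ^{m+1} such that L(x,y) = z(x)/(x+y) − z'(x)/2 for all (x,y) ∈ I × J. -/
theorem stmt_6 (m : ℕ) (hm : 1 ≤ m) (I J : Set ℝ)
    (hIo : IsOpen I) (hIc : I.OrdConnected) (hJo : IsOpen J) (hJc : J.OrdConnected)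
    (hpos : ∀ x ∈ I, ∀ y ∈ J, 0 < x + y)
    (L : ℝ → ℝ → Fin (m + 1) → ℝ)
    (hL : ContDiffOn ℝ (⊤ : ℕ∞) (fun p : ℝ × ℝ => L p.1 p.2) (I ×ˢ J))
    (hyy : ∀ x ∈ I, ∀ y ∈ J, pd2 (pd2 L) x y = (-(2 / (x + y))) • pd2 L x y)
    (hxy : ∀ x ∈ I, ∀ y ∈ J, pd1 (pd2 L) x y = (2 / (x + y) ^ 2) • L x y) :
    ∃ z : ℝ → Fin (m + 1) → ℝ, ContDiffOn ℝ (⊤ : ℕ∞) z I ∧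
      ∀ x ∈ I, ∀ y ∈ J, L x y = (1 / (x + y)) • z x - (1 / 2 : ℝ) • deriv z x := by
  classical
  rcases J.eq_empty_or_nonempty with hJe | ⟨y₀, hy₀⟩
  · exact ⟨0, contDiffOn_const, fun x hx y hy => absurd hy (by simp [hJe])⟩
  set F : ℝ × ℝ → (Fin (m + 1) → ℝ) := fun p => L p.1 p.2 with hFdef
  set S := I ×ˢ J with hSdef
  have hSo : IsOpen S := hIo.prod hJo
  set G : ℝ × ℝ → (Fin (m + 1) → ℝ) :=
    fun p => fderiv ℝ F p ((0 : ℝ), (1 : ℝ)) with hGdef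
  have hG : ContDiffOn ℝ (⊤ : ℕ∞) G S := by
    have h1 := (contDiffOn_succ_iff_fderiv_of_isOpen (n := ((⊤ : ℕ∞) : WithTop ℕ∞)) hSo).mp
      (by have e : ((⊤ : ℕ∞) : WithTop ℕ∞) + 1 = ((⊤ : ℕ∞) : WithTop ℕ∞) := rfl
          rw [e]; exact hL)
    exact h1.2.2.clm_apply contDiffOn_const
  -- the second partial derivative equals G on S
  have hd2 : ∀ x ∈ I, ∀ y ∈ J, HasDerivAt (fun t => L x t) (G (x, y)) y := by
    intro x hx y hy
    have hF : DifferentiableAt ℝ F (x, y) :=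
      (hL.contDiffAt (hSo.mem_nhds ⟨hx, hy⟩)).differentiableAt (by simp)
    have hc : HasDerivAt (fun t : ℝ => ((x : ℝ), t)) ((0 : ℝ), (1 : ℝ)) y :=
      (hasDerivAt_const y x).prodMk (hasDerivAt_id y)
    exact hF.hasFDerivAt.comp_hasDerivAt y hc
  have hp2 : ∀ x ∈ I, ∀ y ∈ J, pd2 L x y = G (x, y) := fun x hx y hy =>
    (hd2 x hx y hy).deriv
  -- second derivative in y
  have h2 : ∀ x ∈ I, ∀ y ∈ J, HasDerivAt (fun t => pd2 L x t) (pd2 (pd2 L) x y) y := by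
    intro x hx y hy
    have hGc : DifferentiableAt ℝ G (x, y) :=
      (hG.contDiffAt (hSo.mem_nhds ⟨hx, hy⟩)).differentiableAt (by simp)
    have hc : HasDerivAt (fun t : ℝ => ((x : ℝ), t)) ((0 : ℝ), (1 : ℝ)) y :=
      (hasDerivAt_const y x).prodMk (hasDerivAt_id y)
    have h' : HasDerivAt (fun t => G (x, t)) (fderiv ℝ G (x, y) ((0 : ℝ), (1 : ℝ))) y :=
      hGc.hasFDerivAt.comp_hasDerivAt y hc
    have hev : (fun t => pd2 L x t) =ᶠ[nhds y] (fun t => G (x, t)) :=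
      Filter.eventuallyEq_of_mem (hJo.mem_nhds hy) (fun t ht => hp2 x hx t ht)
    have h'' := h'.congr_of_eventuallyEq hev
    have hder : pd2 (pd2 L) x y = fderiv ℝ G (x, y) ((0 : ℝ), (1 : ℝ)) := h''.deriv
    rw [hder]; exact h''
  -- mixed derivative
  have h3 : ∀ x ∈ I, ∀ y ∈ J, HasDerivAt (fun t => pd2 L t y) (pd1 (pd2 L) x y) x := by
    intro x hx y hy
    have hGc : DifferentiableAt ℝ G (x, y) :=
      (hG.contDiffAt (hSo.mem_nhds ⟨hx, hy⟩)).differentiableAt (by simp)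
    have hc : HasDerivAt (fun t : ℝ => (t, (y : ℝ))) ((1 : ℝ), (0 : ℝ)) x :=
      (hasDerivAt_id x).prodMk (hasDerivAt_const x y)
    have h' : HasDerivAt (fun t => G (t, y)) (fderiv ℝ G (x, y) ((1 : ℝ), (0 : ℝ))) x :=
      by have := hGc.hasFDerivAt.comp_hasDerivAt x hc; exact this
    have hev : (fun t => pd2 L t y) =ᶠ[nhds x] (fun t => G (t, y)) :=
      Filter.eventuallyEq_of_mem (hIo.mem_nhds hx) (fun t ht => hp2 t ht y hy)
    have h'' := h'.congr_of_eventuallyEq hev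
    have hder : pd1 (pd2 L) x y = fderiv ℝ G (x, y) ((1 : ℝ), (0 : ℝ)) := h''.deriv
    rw [hder]; exact h''
  -- constancy helper
  have const_of : ∀ (g : ℝ → Fin (m + 1) → ℝ),
      (∀ u ∈ J, HasDerivAt g 0 u) → ∀ a ∈ J, ∀ b ∈ J, g a = g b := by
    intro g hder a ha b hb
    have hdiff : DifferentiableOn ℝ g J := fun u hu =>
      (hder u hu).differentiableAt.differentiableWithinAt
    refine (hJc.convex).is_const_of_fderivWithin_eq_zero hdiff (fun u hu => ?_) ha hb
    rw [fderivWithin_of_isOpen hJo hu, (hder u hu).hasFDerivAt.fderiv]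
    ext t u; simp
  set A : ℝ → Fin (m + 1) → ℝ := fun x => ((x + y₀) ^ 2) • G (x, y₀) with hAdef
  have hA : ∀ x ∈ I, A x = ((x + y₀) ^ 2) • pd2 L x y₀ := by
    intro x hx
    rw [hp2 x hx y₀ hy₀]
  have cst : ∀ x ∈ I, ∀ y ∈ J, ((x + y) ^ 2) • pd2 L x y = A x := by
    intro x hx y hy
    have key : ∀ u ∈ J, HasDerivAt (fun t => ((x + t) ^ 2) • pd2 L x t) 0 u := by
      intro u hu
      have hne : x + u ≠ 0 := (hpos x hx u hu).ne'
      have hs : HasDerivAt (fun t : ℝ => (x + t) ^ 2) (2 * (x + u)) u := by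
        simpa using ((hasDerivAt_id u).const_add x).fun_pow 2
      have hsm := hs.smul (h2 x hx u hu)
      rw [hyy x hx u hu] at hsm
      refine hsm.congr_deriv ?_
      rw [smul_smul, show (x + u) ^ 2 * (-(2 / (x + u))) = -(2 * (x + u)) by
        field_simp, neg_smul, neg_add_cancel]
    have := const_of _ key y hy y₀ hy₀
    rw [this, ← hA x hx]
  have pd2val : ∀ x ∈ I, ∀ y ∈ J, pd2 L x y = (((x + y) ^ 2)⁻¹) • A x := by
    intro x hx y hy
    have hne : (x + y) ^ 2 ≠ 0 := pow_ne_zero 2 (hpos x hx y hy).ne'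
    rw [← cst x hx y hy, smul_smul, inv_mul_cancel₀ hne, one_smul]
  set B : ℝ → Fin (m + 1) → ℝ := fun x => L x y₀ + ((x + y₀)⁻¹) • A x with hBdef
  have LB : ∀ x ∈ I, ∀ y ∈ J, L x y = B x - ((x + y)⁻¹) • A x := by
    intro x hx y hy
    have key : ∀ u ∈ J, HasDerivAt (fun t => L x t + ((x + t)⁻¹) • A x) 0 u := by
      intro u hu
      have hne : x + u ≠ 0 := (hpos x hx u hu).ne'
      have h1 : HasDerivAt (fun t => L x t) (pd2 L x u) u := by
        rw [hp2 x hx u hu]; exact hd2 x hx u hu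
      have hinv : HasDerivAt (fun t : ℝ => (x + t)⁻¹) (-1 / (x + u) ^ 2) u := by
        simpa using ((hasDerivAt_id u).const_add x).fun_inv hne
      have h2' := h1.add (hinv.smul_const (A x))
      refine h2'.congr_deriv ?_
      rw [pd2val x hx u hu, show (-1 / (x + u) ^ 2 : ℝ) = -(((x + u) ^ 2)⁻¹) by ring,
        neg_smul, add_neg_cancel]
    have := const_of _ key y hy y₀ hy₀
    rw [eq_sub_iff_add_eq, this, hBdef]
  have hAd : ∀ x ∈ I, HasDerivAt A ((2 : ℝ) • B x) x := by
    intro x hx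
    have hne : x + y₀ ≠ 0 := (hpos x hx y₀ hy₀).ne'
    have hs : HasDerivAt (fun t : ℝ => (t + y₀) ^ 2) (2 * (x + y₀)) x := by
      simpa using ((hasDerivAt_id x).add_const y₀).fun_pow 2
    have hsm := hs.smul (h3 x hx y₀ hy₀)
    have hev : A =ᶠ[nhds x] (fun t => ((t + y₀) ^ 2) • pd2 L t y₀) :=
      Filter.eventuallyEq_of_mem (hIo.mem_nhds hx) (fun t ht => hA t ht)
    have hA' := hsm.congr_of_eventuallyEq hev
    rw [hxy x hx y₀ hy₀, pd2val x hx y₀ hy₀, LB x hx y₀ hy₀] at hA'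
    refine hA'.congr_deriv ?_
    match_scalars <;> field_simp <;> ring
  refine ⟨fun x => -A x, ?_, ?_⟩
  · have hcurve : ContDiffOn ℝ (⊤ : ℕ∞) (fun x : ℝ => ((x : ℝ), y₀)) I :=
      (contDiff_id.prodMk contDiff_const).contDiffOn
    have hmaps : Set.MapsTo (fun x : ℝ => ((x : ℝ), y₀)) I S := fun x hx => ⟨hx, hy₀⟩
    have hGA : ContDiffOn ℝ (⊤ : ℕ∞) (fun x => G (x, y₀)) I := hG.comp hcurve hmaps
    have hpoly : ContDiffOn ℝ (⊤ : ℕ∞) (fun x : ℝ => (x + y₀) ^ 2) I :=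
      ((contDiff_id.add contDiff_const).pow 2).contDiffOn
    exact (hpoly.smul hGA).neg
  · intro x hx y hy
    have hzd : HasDerivAt (fun x => -A x) (-((2 : ℝ) • B x)) x := (hAd x hx).neg
    rw [hzd.deriv, LB x hx y hy]
    module
end

section
/- Let m ≥ 1, let I, J ⊆ ℝ be open intervals with x + y > 0 for all x ∈ I, y ∈ J, and let L : I × J → ℝ^{m+1} be a smooth map. Suppose there exist maps A : I → ℝ^{m+1} and B : J → ℝ^{m+1} such that on I × J: ∂²L/∂x² = A(x) − (2/(x+y)) ∂L/∂x, ∂²L/∂x∂y = (2/(x+y)²) L, and ∂²L/∂y² = B(y) − (2/(x+y)) ∂L/∂y. Then there exist smooth curves z : I → ℝ^{m+1} and w : J → ℝ^{m+1} such that L(x,y) = (z(x)+w(y))/(x+y) − (z'(x)+w'(y))/2 for all (x,y) ∈ I × J. Conversely, every map of the form L(x,y) = (z(x)+w(y))/(x+y) − (z'(x)+w'(y))/2, with z and w three times differentiable, satisfies ∂²L/∂x∂y = (2/(x+y)²) L. -/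
open Set ContDiff

section helpers
variable {V : Type*} [NormedAddCommGroup V] [NormedSpace ℝ V]

lemma sliceX {f : ℝ × ℝ → V} {φ : ℝ × ℝ →L[ℝ] V} {x y : ℝ}
    (h : HasFDerivAt f φ (x, y)) :
    HasDerivAt (fun t => f (t, y)) (φ (1, 0)) x := by
  have h1 : HasDerivAt (fun t : ℝ => ((t, y) : ℝ × ℝ)) ((1 : ℝ), (0 : ℝ)) x :=
    (hasDerivAt_id x).prodMk (hasDerivAt_const x y)
  exact h.comp_hasDerivAt x h1

lemma sliceY {f : ℝ × ℝ → V} {φ : ℝ × ℝ →L[ℝ] V} {x y : ℝ}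
    (h : HasFDerivAt f φ (x, y)) :
    HasDerivAt (fun t => f (x, t)) (φ (0, 1)) y := by
  have h1 : HasDerivAt (fun t : ℝ => ((x, t) : ℝ × ℝ)) ((0 : ℝ), (1 : ℝ)) y :=
    (hasDerivAt_const y x).prodMk (hasDerivAt_id y)
  exact h.comp_hasDerivAt y h1

lemma constOn {s : Set ℝ} (hs : s.OrdConnected) {f : ℝ → V}
    (hf : ∀ x ∈ s, HasDerivAt f 0 x) {a b : ℝ} (ha : a ∈ s) (hb : b ∈ s) :
    f a = f b := by
  have hconv : Convex ℝ s := hs.convex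
  have h2 := hconv.norm_image_sub_le_of_norm_hasDerivWithin_le
    (f' := fun _ => (0 : V)) (fun x hx => (hf x hx).hasDerivWithinAt)
    (C := 0) (fun x hx => by simp) hb ha
  have h3 : ‖f a - f b‖ ≤ 0 := by simpa using h2
  have h4 := le_antisymm h3 (norm_nonneg _)
  rwa [norm_eq_zero, sub_eq_zero] at h4

set_option maxHeartbeats 2000000 in
lemma part1 (I J : Set ℝ)
    (hIo : IsOpen I) (hIc : I.OrdConnected) (hJo : IsOpen J) (hJc : J.OrdConnected)
    (hpos : ∀ x ∈ I, ∀ y ∈ J, 0 < x + y)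
    (L : ℝ → ℝ → V)
    (hL : ContDiffOn ℝ (⊤ : ℕ∞) (fun p : ℝ × ℝ => L p.1 p.2) (I ×ˢ J))
    (B : ℝ → V)
    (hxy : ∀ x ∈ I, ∀ y ∈ J, pd1 (pd2 L) x y = (2 / (x + y) ^ 2) • L x y)
    (hyy : ∀ x ∈ I, ∀ y ∈ J, pd2 (pd2 L) x y = B y - (2 / (x + y)) • pd2 L x y) :
    ∃ z w : ℝ → V, ContDiffOn ℝ (⊤ : ℕ∞) z I ∧ ContDiffOn ℝ (⊤ : ℕ∞) w J ∧
      ∀ x ∈ I, ∀ y ∈ J,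
        L x y = (1 / (x + y)) • (z x + w y) - (1 / 2 : ℝ) • (deriv z x + deriv w y) := by
  rcases I.eq_empty_or_nonempty with hIe | ⟨x0, hx0⟩
  · exact ⟨0, 0, contDiffOn_const, contDiffOn_const, by simp [hIe]⟩
  rcases J.eq_empty_or_nonempty with hJe | ⟨y0, hy0⟩
  · exact ⟨0, 0, contDiffOn_const, contDiffOn_const, by simp [hJe]⟩
  set F : ℝ × ℝ → V := fun p => L p.1 p.2 with hFdef
  set U : Set (ℝ × ℝ) := I ×ˢ J with hUdef
  have hUo : IsOpen U := hIo.prod hJo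
  have hmem : ∀ {x y : ℝ}, x ∈ I → y ∈ J → (x, y) ∈ U := fun hx hy => ⟨hx, hy⟩
  set f1 : ℝ × ℝ → V := fun p => fderiv ℝ F p (1, 0) with hf1def
  set f2 : ℝ × ℝ → V := fun p => fderiv ℝ F p (0, 1) with hf2def
  -- differentiability of F
  have hFat : ∀ p ∈ U, ContDiffAt ℝ (⊤ : ℕ∞) F p := fun p hp => hL.contDiffAt (hUo.mem_nhds hp)
  have hFd : ∀ p ∈ U, HasFDerivAt F (fderiv ℝ F p) p := fun p hp =>
    ((hFat p hp).differentiableAt (by simp)).hasFDerivAt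
  -- smoothness of fderiv F, f1, f2
  have hfdF : ContDiffOn ℝ (⊤ : ℕ∞) (fderiv ℝ F) U := hL.fderiv_of_isOpen hUo (by simp)
  have happ : ∀ v : ℝ × ℝ, ContDiffOn ℝ (⊤ : ℕ∞)
      (fun p : ℝ × ℝ => fderiv ℝ F p v) U := by
    intro v
    exact (ContinuousLinearMap.apply ℝ V v).contDiff.comp_contDiffOn hfdF
  have hf1s : ContDiffOn ℝ (⊤ : ℕ∞) f1 U := happ (1, 0)
  have hf2s : ContDiffOn ℝ (⊤ : ℕ∞) f2 U := happ (0, 1)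
  have hf1d : ∀ p ∈ U, HasFDerivAt f1 (fderiv ℝ f1 p) p := fun p hp =>
    ((hf1s.contDiffAt (hUo.mem_nhds hp)).differentiableAt (by simp)).hasFDerivAt
  have hf2d : ∀ p ∈ U, HasFDerivAt f2 (fderiv ℝ f2 p) p := fun p hp =>
    ((hf2s.contDiffAt (hUo.mem_nhds hp)).differentiableAt (by simp)).hasFDerivAt
  -- slice derivatives of L
  have hL1 : ∀ x ∈ I, ∀ y ∈ J, HasDerivAt (fun t => L t y) (f1 (x, y)) x := fun x hx y hy =>
    sliceX (hFd _ (hmem hx hy))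
  have hL2 : ∀ x ∈ I, ∀ y ∈ J, HasDerivAt (fun t => L x t) (f2 (x, y)) y := fun x hx y hy =>
    sliceY (hFd _ (hmem hx hy))
  -- identification of pd2 L with f2 on U
  have hpd2 : ∀ x ∈ I, ∀ y ∈ J, pd2 L x y = f2 (x, y) := fun x hx y hy =>
    (hL2 x hx y hy).deriv
  have hpd1 : ∀ x ∈ I, ∀ y ∈ J, pd1 L x y = f1 (x, y) := fun x hx y hy =>
    (hL1 x hx y hy).deriv
  -- neighborhood facts
  have hnbdX : ∀ x ∈ I, ∀ y ∈ J, ∀ᶠ t in nhds x, t ∈ I := fun x hx y hy =>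
    hIo.mem_nhds hx
  have hnbdY : ∀ y ∈ J, ∀ᶠ t in nhds y, t ∈ J := fun y hy => hJo.mem_nhds hy
  -- second derivatives : values of fderiv f2
  have hg2x : ∀ x ∈ I, ∀ y ∈ J,
      fderiv ℝ f2 (x, y) (1, 0) = (2 / (x + y) ^ 2) • L x y := by
    intro x hx y hy
    have hslice : HasDerivAt (fun t => f2 (t, y)) (fderiv ℝ f2 (x, y) (1, 0)) x :=
      sliceX (hf2d _ (hmem hx hy))
    have heq : (fun t => pd2 L t y) =ᶠ[nhds x] fun t => f2 (t, y) := by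
      filter_upwards [hIo.mem_nhds hx] with t ht
      exact hpd2 t ht y hy
    have : pd1 (pd2 L) x y = fderiv ℝ f2 (x, y) (1, 0) := by
      rw [pd1, heq.deriv_eq]; exact hslice.deriv
    rw [← this]; exact hxy x hx y hy
  have hg2y : ∀ x ∈ I, ∀ y ∈ J,
      fderiv ℝ f2 (x, y) (0, 1) = B y - (2 / (x + y)) • f2 (x, y) := by
    intro x hx y hy
    have hslice : HasDerivAt (fun t => f2 (x, t)) (fderiv ℝ f2 (x, y) (0, 1)) y :=
      sliceY (hf2d _ (hmem hx hy))
    have heq : (fun t => pd2 L x t) =ᶠ[nhds y] fun t => f2 (x, t) := by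
      filter_upwards [hJo.mem_nhds hy] with t ht
      exact hpd2 x hx t ht
    have h5 : pd2 (pd2 L) x y = fderiv ℝ f2 (x, y) (0, 1) := by
      rw [pd2, heq.deriv_eq]; exact hslice.deriv
    rw [← h5, hyy x hx y hy, hpd2 x hx y hy]
  -- symmetry : fderiv f1 (0,1) = fderiv f2 (1,0)
  have hsym : ∀ x ∈ I, ∀ y ∈ J,
      fderiv ℝ f1 (x, y) (0, 1) = (2 / (x + y) ^ 2) • L x y := by
    intro x hx y hy
    have hp : (x, y) ∈ U := hmem hx hy
    have hD2 : HasFDerivAt (fderiv ℝ F) (fderiv ℝ (fderiv ℝ F) (x, y)) (x, y) :=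
      ((hfdF.contDiffAt (hUo.mem_nhds hp)).differentiableAt (by simp)).hasFDerivAt
    have hcomp1 : HasFDerivAt f1
        ((ContinuousLinearMap.apply ℝ V ((1 : ℝ), (0 : ℝ))).comp
          (fderiv ℝ (fderiv ℝ F) (x, y))) (x, y) :=
      (ContinuousLinearMap.apply ℝ V ((1 : ℝ), (0 : ℝ))).hasFDerivAt.comp (x, y) hD2
    have hcomp2 : HasFDerivAt f2
        ((ContinuousLinearMap.apply ℝ V ((0 : ℝ), (1 : ℝ))).comp
          (fderiv ℝ (fderiv ℝ F) (x, y))) (x, y) :=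
      (ContinuousLinearMap.apply ℝ V ((0 : ℝ), (1 : ℝ))).hasFDerivAt.comp (x, y) hD2
    have hIsSym : IsSymmSndFDerivAt ℝ F (x, y) :=
      (hFat _ hp).isSymmSndFDerivAt (by simp; exact WithTop.coe_le_coe.mpr le_top)
    have e1 : fderiv ℝ f1 (x, y) (0, 1) =
        fderiv ℝ (fderiv ℝ F) (x, y) (0, 1) (1, 0) := by
      rw [hcomp1.fderiv]; rfl
    have e2 : fderiv ℝ f2 (x, y) (1, 0) =
        fderiv ℝ (fderiv ℝ F) (x, y) (1, 0) (0, 1) := by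
      rw [hcomp2.fderiv]; rfl
    rw [e1, ← hIsSym (1, 0) (0, 1), ← e2]
    exact hg2x x hx y hy

  -- the curves
  set Zf : ℝ → V := fun x => (-2 : ℝ) • L x y0 - (2 * (x + y0)) • f2 (x, y0) with hZfdef
  set z : ℝ → V := fun x => (-((x + y0) ^ 2)) • f2 (x, y0) with hzdef
  set w1 : ℝ → V := fun y => (-((x0 + y) ^ 2)) • f1 (x0, y) with hw1def
  set Wf : ℝ → V := fun y => (-2 : ℝ) • L x0 y - (2 * (x0 + y)) • f1 (x0, y) with hWfdef
  set W'f : ℝ → V := fun y =>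
    (-2 : ℝ) • f2 (x0, y) - (2 : ℝ) • f1 (x0, y) - (4 / (x0 + y)) • L x0 y with hW'fdef
  set w : ℝ → V := fun y =>
    w1 y - w1 y0 - (y - y0) • Wf y0 - ((y - y0) ^ 2 / 2) • W'f y0 with hwdef
  set w'f : ℝ → V := fun y => Wf y - Wf y0 - (y - y0) • W'f y0 with hw'fdef
  set w''f : ℝ → V := fun y => W'f y - W'f y0 with hw''fdef
  -- derivative of z
  have hzd : ∀ x ∈ I, HasDerivAt z (Zf x) x := by
    intro x hx
    have hu : x + y0 ≠ 0 := ne_of_gt (hpos x hx y0 hy0)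
    have hc : HasDerivAt (fun t : ℝ => -((t + y0) ^ 2)) (-(2 * (x + y0))) x := by
      have h0 : HasDerivAt (fun t : ℝ => t + y0) 1 x := by
        simpa using (hasDerivAt_id x).fun_add (hasDerivAt_const x y0)
      simpa [mul_comm] using (h0.fun_pow 2).fun_neg
    have hf : HasDerivAt (fun t : ℝ => f2 (t, y0)) ((2 / (x + y0) ^ 2) • L x y0) x := by
      have := sliceX (hf2d _ (hmem hx hy0))
      rwa [hg2x x hx y0 hy0] at this
    have hder := hc.fun_smul hf
    convert hder using 1
    rw [show Zf x = (-2 : ℝ) • L x y0 - (2 * (x + y0)) • f2 (x, y0) from rfl]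
    generalize hg : x + y0 = u at hu ⊢
    match_scalars <;> field_simp <;> ring_nf
  -- derivative of w1
  have hw1d : ∀ y ∈ J, HasDerivAt w1 (Wf y) y := by
    intro y hy
    have hu : x0 + y ≠ 0 := ne_of_gt (hpos x0 hx0 y hy)
    have hc : HasDerivAt (fun t : ℝ => -((x0 + t) ^ 2)) (-(2 * (x0 + y))) y := by
      have h0 : HasDerivAt (fun t : ℝ => x0 + t) 1 y := by
        simpa using (hasDerivAt_const y x0).fun_add (hasDerivAt_id y)
      simpa [mul_comm] using (h0.fun_pow 2).fun_neg
    have hf : HasDerivAt (fun t : ℝ => f1 (x0, t)) ((2 / (x0 + y) ^ 2) • L x0 y) y := by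
      have := sliceY (hf1d _ (hmem hx0 hy))
      rwa [hsym x0 hx0 y hy] at this
    have hder := hc.fun_smul hf
    convert hder using 1
    rw [show Wf y = (-2 : ℝ) • L x0 y - (2 * (x0 + y)) • f1 (x0, y) from rfl]
    generalize hg : x0 + y = u at hu ⊢
    match_scalars <;> field_simp <;> ring_nf
  -- derivative of Wf
  have hWd : ∀ y ∈ J, HasDerivAt Wf (W'f y) y := by
    intro y hy
    have hu : x0 + y ≠ 0 := ne_of_gt (hpos x0 hx0 y hy)
    have ha : HasDerivAt (fun t : ℝ => (-2 : ℝ) • L x0 t) ((-2 : ℝ) • f2 (x0, y)) y :=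
      (hL2 x0 hx0 y hy).fun_const_smul (-2 : ℝ)
    have hc : HasDerivAt (fun t : ℝ => (2 * (x0 + t) : ℝ)) 2 y := by
      have h0 : HasDerivAt (fun t : ℝ => x0 + t) 1 y := by
        simpa using (hasDerivAt_const y x0).fun_add (hasDerivAt_id y)
      simpa using h0.const_mul (2 : ℝ)
    have hf : HasDerivAt (fun t : ℝ => f1 (x0, t)) ((2 / (x0 + y) ^ 2) • L x0 y) y := by
      have := sliceY (hf1d _ (hmem hx0 hy))
      rwa [hsym x0 hx0 y hy] at this
    have hb := hc.fun_smul hf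
    have hder := ha.fun_sub hb
    convert hder using 1
    rw [show W'f y = (-2 : ℝ) • f2 (x0, y) - (2 : ℝ) • f1 (x0, y) - (4 / (x0 + y)) • L x0 y
      from rfl]
    generalize hg : x0 + y = u at hu ⊢
    match_scalars <;> field_simp <;> ring_nf
  -- derivative of W'f
  have hW'd : ∀ y ∈ J, HasDerivAt W'f ((-2 : ℝ) • B y) y := by
    intro y hy
    have hu : x0 + y ≠ 0 := ne_of_gt (hpos x0 hx0 y hy)
    have ha : HasDerivAt (fun t : ℝ => (-2 : ℝ) • f2 (x0, t))
        ((-2 : ℝ) • (B y - (2 / (x0 + y)) • f2 (x0, y))) y := by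
      have h5 := sliceY (hf2d _ (hmem hx0 hy))
      rw [hg2y x0 hx0 y hy] at h5
      exact h5.fun_const_smul (-2 : ℝ)
    have hb : HasDerivAt (fun t : ℝ => (2 : ℝ) • f1 (x0, t))
        ((2 : ℝ) • ((2 / (x0 + y) ^ 2) • L x0 y)) y := by
      have h5 := sliceY (hf1d _ (hmem hx0 hy))
      rw [hsym x0 hx0 y hy] at h5
      exact h5.fun_const_smul (2 : ℝ)
    have hc : HasDerivAt (fun t : ℝ => (4 / (x0 + t) : ℝ)) (-(4 / (x0 + y) ^ 2)) y := by
      have h0 : HasDerivAt (fun t : ℝ => x0 + t) 1 y := by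
        simpa using (hasDerivAt_const y x0).fun_add (hasDerivAt_id y)
      have h6 := (h0.fun_inv hu).const_mul (4 : ℝ)
      have : (4 : ℝ) * (-1 / (x0 + y) ^ 2) = -(4 / (x0 + y) ^ 2) := by ring
      rw [this] at h6
      simpa only [div_eq_mul_inv] using h6
    have hd := hc.fun_smul (hL2 x0 hx0 y hy)
    have hder := (ha.fun_sub hb).fun_sub hd
    convert hder using 1
    generalize hg : x0 + y = u at hu ⊢
    match_scalars <;> field_simp <;> ring_nf
  -- derivatives of w, w'f, w''f
  have hwd : ∀ y ∈ J, HasDerivAt w (w'f y) y := by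
    intro y hy
    have h1 : HasDerivAt (fun t : ℝ => (t - y0)) 1 y := by
      simpa using (hasDerivAt_id y).fun_sub (hasDerivAt_const y y0)
    have h2 : HasDerivAt (fun t : ℝ => (t - y0) • Wf y0) ((1 : ℝ) • Wf y0) y :=
      h1.smul_const (Wf y0)
    have h3 : HasDerivAt (fun t : ℝ => ((t - y0) ^ 2 / 2)) (y - y0) y := by
      have h7 := (h1.fun_pow 2).div_const 2
      simpa [mul_comm, mul_div_assoc] using h7
    have h4 : HasDerivAt (fun t : ℝ => ((t - y0) ^ 2 / 2) • W'f y0) ((y - y0) • W'f y0) y :=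
      h3.smul_const (W'f y0)
    have h5 := (((hw1d y hy).sub_const (w1 y0)).fun_sub h2).fun_sub h4
    convert h5 using 1
    rw [show w'f y = Wf y - Wf y0 - (y - y0) • W'f y0 from rfl]
    module
  have hw'd : ∀ y ∈ J, HasDerivAt w'f (w''f y) y := by
    intro y hy
    have h1 : HasDerivAt (fun t : ℝ => (t - y0)) 1 y := by
      simpa using (hasDerivAt_id y).fun_sub (hasDerivAt_const y y0)
    have h2 : HasDerivAt (fun t : ℝ => (t - y0) • W'f y0) ((1 : ℝ) • W'f y0) y :=
      h1.smul_const (W'f y0)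
    have h5 := ((hWd y hy).sub_const (Wf y0)).fun_sub h2
    convert h5 using 1
    rw [show w''f y = W'f y - W'f y0 from rfl]
    module
  have hw''d : ∀ y ∈ J, HasDerivAt w''f ((-2 : ℝ) • B y) y := by
    intro y hy
    exact (hW'd y hy).sub_const (W'f y0)
  -- values at y0
  have hwy0 : w y0 = 0 := by
    rw [show w y0 = w1 y0 - w1 y0 - (y0 - y0) • Wf y0 - ((y0 - y0) ^ 2 / 2) • W'f y0 from rfl]
    simp
  have hw'y0 : w'f y0 = 0 := by
    rw [show w'f y0 = Wf y0 - Wf y0 - (y0 - y0) • W'f y0 from rfl]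
    simp
  have hw''y0 : w''f y0 = 0 := by
    rw [show w''f y0 = W'f y0 - W'f y0 from rfl]
    simp
  -- smoothness
  have hline1 : ContDiff ℝ (⊤ : ℕ∞) (fun x : ℝ => ((x, y0) : ℝ × ℝ)) :=
    contDiff_id.prodMk contDiff_const
  have hline2 : ContDiff ℝ (⊤ : ℕ∞) (fun y : ℝ => ((x0, y) : ℝ × ℝ)) :=
    contDiff_const.prodMk contDiff_id
  have hzs : ContDiffOn ℝ (⊤ : ℕ∞) z I := by
    have hc2 : ContDiffOn ℝ (⊤ : ℕ∞) (fun x : ℝ => f2 (x, y0)) I :=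
      hf2s.comp hline1.contDiffOn (fun x hx => hmem hx hy0)
    have hpoly : ContDiffOn ℝ (⊤ : ℕ∞) (fun x : ℝ => -((x + y0) ^ 2)) I :=
      (((contDiff_id.add contDiff_const).pow 2).neg).contDiffOn
    exact hpoly.smul hc2
  have hws : ContDiffOn ℝ (⊤ : ℕ∞) w J := by
    have hc1 : ContDiffOn ℝ (⊤ : ℕ∞) (fun y : ℝ => f1 (x0, y)) J :=
      hf1s.comp hline2.contDiffOn (fun y hy => hmem hx0 hy)
    have hpoly : ContDiffOn ℝ (⊤ : ℕ∞) (fun y : ℝ => -((x0 + y) ^ 2)) J :=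
      (((contDiff_const.add contDiff_id).pow 2).neg).contDiffOn
    have hw1s : ContDiffOn ℝ (⊤ : ℕ∞) w1 J := hpoly.smul hc1
    have hl1 : ContDiffOn ℝ (⊤ : ℕ∞) (fun y : ℝ => (y - y0) • Wf y0) J :=
      ((contDiff_id.sub contDiff_const).smul contDiff_const).contDiffOn
    have hl2 : ContDiffOn ℝ (⊤ : ℕ∞)
        (fun y : ℝ => ((y - y0) ^ 2 / 2) • W'f y0) J :=
      ((((contDiff_id.sub contDiff_const).pow 2).div_const 2).smul contDiff_const).contDiffOn
    exact ((hw1s.sub contDiffOn_const).sub hl1).sub hl2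
  refine ⟨z, w, hzs, hws, ?_⟩
  intro x hx y hy
  have hu0 : (0 : ℝ) < x + y0 := hpos x hx y0 hy0
  -- the function P ≡ 0
  set P : ℝ → V := fun y => ((x + y) ^ 2) • f2 (x, y) - (x + y) • w'f y + (z x + w y)
    + ((x + y) ^ 2 / 2) • w''f y with hPdef
  have hPd : ∀ y ∈ J, HasDerivAt P 0 y := by
    intro y hy
    have hu : x + y ≠ 0 := ne_of_gt (hpos x hx y hy)
    have h0 : HasDerivAt (fun t : ℝ => x + t) 1 y := by
      simpa using (hasDerivAt_const y x).fun_add (hasDerivAt_id y)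
    have hsq : HasDerivAt (fun t : ℝ => (x + t) ^ 2) (2 * (x + y)) y := by
      simpa [mul_comm] using h0.fun_pow 2
    have ha : HasDerivAt (fun t : ℝ => ((x + t) ^ 2) • f2 (x, t))
        ((x + y) ^ 2 • (B y - (2 / (x + y)) • f2 (x, y)) + (2 * (x + y)) • f2 (x, y)) y := by
      have hf : HasDerivAt (fun t : ℝ => f2 (x, t)) (B y - (2 / (x + y)) • f2 (x, y)) y := by
        have h9 := sliceY (hf2d _ (hmem hx hy))
        rwa [hg2y x hx y hy] at h9
      exact hsq.fun_smul hf
    have hb : HasDerivAt (fun t : ℝ => (x + t) • w'f t)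
        ((x + y) • w''f y + (1 : ℝ) • w'f y) y := h0.fun_smul (hw'd y hy)
    have hc : HasDerivAt (fun t : ℝ => z x + w t) (w'f y) y := by
      simpa using (hasDerivAt_const y (z x)).fun_add (hwd y hy)
    have hd : HasDerivAt (fun t : ℝ => ((x + t) ^ 2 / 2) • w''f t)
        (((x + y) ^ 2 / 2) • ((-2 : ℝ) • B y) + (x + y) • w''f y) y := by
      have hsq2 : HasDerivAt (fun t : ℝ => ((x + t) ^ 2 / 2)) (x + y) y := by
        have h9 := hsq.div_const 2
        simpa [mul_div_assoc] using h9
      exact hsq2.fun_smul (hw''d y hy)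
    have hder := ((ha.fun_sub hb).fun_add hc).fun_add hd
    convert hder using 1
    generalize hg : x + y = u at hu ⊢
    match_scalars <;> field_simp <;> ring_nf
  have hPy0 : P y0 = 0 := by
    rw [show P y0 = ((x + y0) ^ 2) • f2 (x, y0) - (x + y0) • w'f y0 + (z x + w y0)
      + ((x + y0) ^ 2 / 2) • w''f y0 from rfl]
    rw [hwy0, hw'y0, hw''y0]
    rw [show z x = (-((x + y0) ^ 2)) • f2 (x, y0) from rfl]
    module
  have hPz : ∀ y' ∈ J, P y' = 0 := fun y' hy' => (constOn hJc hPd hy' hy0).trans hPy0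
  -- the function rho ≡ 0
  set ρ : ℝ → V := fun y =>
    L x y - ((1 / (x + y)) • (z x + w y) - (1 / 2 : ℝ) • (Zf x + w'f y)) with hρdef
  have hρd : ∀ y ∈ J, HasDerivAt ρ 0 y := by
    intro y hy
    have hu : x + y ≠ 0 := ne_of_gt (hpos x hx y hy)
    have h0 : HasDerivAt (fun t : ℝ => x + t) 1 y := by
      simpa using (hasDerivAt_const y x).fun_add (hasDerivAt_id y)
    have hinv : HasDerivAt (fun t : ℝ => 1 / (x + t)) (-(1 / (x + y) ^ 2)) y := by
      simpa [one_div, neg_div] using h0.fun_inv hu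
    have hzw : HasDerivAt (fun t : ℝ => z x + w t) (w'f y) y := by
      simpa using (hasDerivAt_const y (z x)).fun_add (hwd y hy)
    have ha : HasDerivAt (fun t : ℝ => (1 / (x + t)) • (z x + w t))
        ((1 / (x + y)) • w'f y + (-(1 / (x + y) ^ 2)) • (z x + w y)) y :=
      hinv.fun_smul hzw
    have hb : HasDerivAt (fun t : ℝ => (1 / 2 : ℝ) • (Zf x + w'f t))
        ((1 / 2 : ℝ) • w''f y) y := by
      have h6 : HasDerivAt (fun t : ℝ => Zf x + w'f t) (w''f y) y := by
        simpa using (hasDerivAt_const y (Zf x)).fun_add (hw'd y hy)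
      simpa [smul_add] using h6.fun_const_smul (1 / 2 : ℝ)
    have h7 := (hL2 x hx y hy).fun_sub (ha.fun_sub hb)
    have h8 : f2 (x, y) - ((1 / (x + y)) • w'f y + (-(1 / (x + y) ^ 2)) • (z x + w y)
        - (1 / 2 : ℝ) • w''f y) = ((x + y) ^ 2)⁻¹ • P y := by
      rw [show P y = ((x + y) ^ 2) • f2 (x, y) - (x + y) • w'f y + (z x + w y)
        + ((x + y) ^ 2 / 2) • w''f y from rfl]
      generalize hg : x + y = u at hu ⊢
      match_scalars <;> field_simp <;> ring_nf
    rw [h8, hPz y hy, smul_zero] at h7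
    exact h7
  have hρy0 : ρ y0 = 0 := by
    rw [show ρ y0 = L x y0 - ((1 / (x + y0)) • (z x + w y0)
      - (1 / 2 : ℝ) • (Zf x + w'f y0)) from rfl]
    rw [hwy0, hw'y0]
    rw [show z x = (-((x + y0) ^ 2)) • f2 (x, y0) from rfl]
    rw [show Zf x = (-2 : ℝ) • L x y0 - (2 * (x + y0)) • f2 (x, y0) from rfl]
    have hu : x + y0 ≠ 0 := ne_of_gt hu0
    generalize hg : x + y0 = u at hu ⊢
    match_scalars <;> field_simp <;> ring_nf
  have hρz : ρ y = 0 := (constOn hJc hρd hy hy0).trans hρy0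
  have hfinal : L x y = (1 / (x + y)) • (z x + w y) - (1 / 2 : ℝ) • (Zf x + w'f y) := by
    have h9 : L x y - ((1 / (x + y)) • (z x + w y) - (1 / 2 : ℝ) • (Zf x + w'f y)) = 0 := hρz
    rw [sub_eq_zero] at h9
    exact h9
  rw [(hzd x hx).deriv, (hwd y hy).deriv]
  exact hfinal

end helpers

section part2
variable {V : Type*} [NormedAddCommGroup V] [NormedSpace ℝ V]

lemma part2 (z w : ℝ → V) (hz : ContDiff ℝ 3 z) (hw : ContDiff ℝ 3 w)
    (x y : ℝ) (hxy : 0 < x + y) :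
    pd1 (pd2 (fun a b : ℝ =>
        (1 / (a + b)) • (z a + w b) - (1 / 2 : ℝ) • (deriv z a + deriv w b))) x y =
      (2 / (x + y) ^ 2) •
        ((1 / (x + y)) • (z x + w y) - (1 / 2 : ℝ) • (deriv z x + deriv w y)) := by
  have hz1 : Differentiable ℝ z := hz.differentiable (by norm_num)
  have hw1 : Differentiable ℝ w := hw.differentiable (by norm_num)
  have hz2 : ContDiff ℝ 2 (deriv z) := (contDiff_succ_iff_deriv.mp (by exact_mod_cast hz)).2.2
  have hw2 : ContDiff ℝ 2 (deriv w) := (contDiff_succ_iff_deriv.mp (by exact_mod_cast hw)).2.2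
  have hz2' : Differentiable ℝ (deriv z) := hz2.differentiable (by norm_num)
  have hw2' : Differentiable ℝ (deriv w) := hw2.differentiable (by norm_num)
  have hne : x + y ≠ 0 := by linarith
  -- inner derivative
  have hG : ∀ s : ℝ, s + y ≠ 0 →
      pd2 (fun a b : ℝ =>
        (1 / (a + b)) • (z a + w b) - (1 / 2 : ℝ) • (deriv z a + deriv w b)) s y =
      (1 / (s + y)) • deriv w y + (-(1 / (s + y) ^ 2)) • (z s + w y)
        - (1 / 2 : ℝ) • deriv (deriv w) y := by
    intro s hs
    have h0 : HasDerivAt (fun t : ℝ => s + t) 1 y := by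
      simpa using (hasDerivAt_const y s).fun_add (hasDerivAt_id y)
    have hinv : HasDerivAt (fun t : ℝ => 1 / (s + t)) (-(1 / (s + y) ^ 2)) y := by
      simpa [one_div, neg_div] using h0.fun_inv hs
    have hzw : HasDerivAt (fun t : ℝ => z s + w t) (deriv w y) y := by
      simpa using (hasDerivAt_const y (z s)).fun_add (hw1 y).hasDerivAt
    have h1 : HasDerivAt (fun t : ℝ => (1 / (s + t)) • (z s + w t))
        ((1 / (s + y)) • deriv w y + (-(1 / (s + y) ^ 2)) • (z s + w y)) y :=
      hinv.fun_smul hzw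
    have h2 : HasDerivAt (fun t : ℝ => (1 / 2 : ℝ) • (deriv z s + deriv w t))
        ((1 / 2 : ℝ) • deriv (deriv w) y) y := by
      have h3 : HasDerivAt (fun t : ℝ => deriv z s + deriv w t) (deriv (deriv w) y) y := by
        simpa using (hasDerivAt_const y (deriv z s)).fun_add (hw2' y).hasDerivAt
      simpa [smul_add] using h3.fun_const_smul (1/2 : ℝ)
    exact (h1.fun_sub h2).deriv
  -- outer derivative
  have hev : ∀ᶠ s in nhds x, s + y ≠ 0 := by
    have hc : ContinuousAt (fun s : ℝ => s + y) x := by fun_prop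
    exact hc.eventually_ne (by linarith)
  have houter : HasDerivAt (fun s : ℝ => (1 / (s + y)) • deriv w y
      + (-(1 / (s + y) ^ 2)) • (z s + w y) - (1 / 2 : ℝ) • deriv (deriv w) y)
      ((-(1 / (x + y) ^ 2)) • deriv w y
        + ((-(1 / (x + y) ^ 2)) • deriv z x + (2 / (x + y) ^ 3) • (z x + w y))) x := by
    have h0 : HasDerivAt (fun s : ℝ => s + y) 1 x := by
      simpa using (hasDerivAt_id x).fun_add (hasDerivAt_const x y)
    have hsq : HasDerivAt (fun s : ℝ => (s + y) ^ 2) (2 * (x + y)) x := by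
      simpa [mul_comm] using h0.fun_pow 2
    have hinv2 : HasDerivAt (fun s : ℝ => -(1 / (s + y) ^ 2)) (2 / (x + y) ^ 3) x := by
      have h4 := (hsq.fun_inv (pow_ne_zero 2 hne)).fun_neg
      simp only [one_div]
      refine h4.congr_deriv ?_
      rw [neg_div, neg_neg, div_eq_div_iff (by positivity) (by positivity)]
      ring
    have ha : HasDerivAt (fun s : ℝ => (-(1 / (s + y) ^ 2)) • (z s + w y))
        ((-(1 / (x + y) ^ 2)) • deriv z x + (2 / (x + y) ^ 3) • (z x + w y)) x := by
      have hzw : HasDerivAt (fun s : ℝ => z s + w y) (deriv z x) x :=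
        (hz1 x).hasDerivAt.add_const (w y)
      exact hinv2.fun_smul hzw
    have hb : HasDerivAt (fun s : ℝ => (1 / (s + y)) • deriv w y)
        ((-(1 / (x + y) ^ 2)) • deriv w y) x := by
      have hinv : HasDerivAt (fun s : ℝ => 1 / (s + y)) (-(1 / (x + y) ^ 2)) x := by
        simpa [one_div, neg_div] using h0.fun_inv hne
      exact hinv.smul_const (deriv w y)
    simpa using (hb.add ha).sub_const ((1 / 2 : ℝ) • deriv (deriv w) y)
  have hmain : pd1 (pd2 (fun a b : ℝ =>
      (1 / (a + b)) • (z a + w b) - (1 / 2 : ℝ) • (deriv z a + deriv w b))) x y =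
      (-(1 / (x + y) ^ 2)) • deriv w y
        + ((-(1 / (x + y) ^ 2)) • deriv z x + (2 / (x + y) ^ 3) • (z x + w y)) := by
    unfold pd1
    have heq : (fun s : ℝ => pd2 (fun a b : ℝ =>
        (1 / (a + b)) • (z a + w b) - (1 / 2 : ℝ) • (deriv z a + deriv w b)) s y)
        =ᶠ[nhds x] (fun s : ℝ => (1 / (s + y)) • deriv w y
          + (-(1 / (s + y) ^ 2)) • (z s + w y) - (1 / 2 : ℝ) • deriv (deriv w) y) := by
      filter_upwards [hev] with s hs
      exact hG s hs
    rw [heq.deriv_eq]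
    exact houter.deriv
  rw [hmain]
  set u := x + y with hu
  match_scalars <;> field_simp <;> ring
end part2

theorem stmt_8 (m : ℕ) (hm : 1 ≤ m) (I J : Set ℝ)
    (hIo : IsOpen I) (hIc : I.OrdConnected) (hJo : IsOpen J) (hJc : J.OrdConnected)
    (hpos : ∀ x ∈ I, ∀ y ∈ J, 0 < x + y)
    (L : ℝ → ℝ → Fin (m + 1) → ℝ)
    (hL : ContDiffOn ℝ (⊤ : ℕ∞) (fun p : ℝ × ℝ => L p.1 p.2) (I ×ˢ J))
    (A : ℝ → Fin (m + 1) → ℝ) (B : ℝ → Fin (m + 1) → ℝ)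
    (hxx : ∀ x ∈ I, ∀ y ∈ J, pd1 (pd1 L) x y = A x - (2 / (x + y)) • pd1 L x y)
    (hxy : ∀ x ∈ I, ∀ y ∈ J, pd1 (pd2 L) x y = (2 / (x + y) ^ 2) • L x y)
    (hyy : ∀ x ∈ I, ∀ y ∈ J, pd2 (pd2 L) x y = B y - (2 / (x + y)) • pd2 L x y) :
    (∃ z w : ℝ → Fin (m + 1) → ℝ, ContDiffOn ℝ (⊤ : ℕ∞) z I ∧ ContDiffOn ℝ (⊤ : ℕ∞) w J ∧
      ∀ x ∈ I, ∀ y ∈ J,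
        L x y = (1 / (x + y)) • (z x + w y) - (1 / 2 : ℝ) • (deriv z x + deriv w y)) ∧
    (∀ z w : ℝ → Fin (m + 1) → ℝ, ContDiff ℝ 3 z → ContDiff ℝ 3 w →
      ∀ x ∈ I, ∀ y ∈ J,
        pd1 (pd2 (fun a b : ℝ =>
            (1 / (a + b)) • (z a + w b) - (1 / 2 : ℝ) • (deriv z a + deriv w b))) x y =
          (2 / (x + y) ^ 2) •
            ((1 / (x + y)) • (z x + w y) - (1 / 2 : ℝ) • (deriv z x + deriv w y))) := by
  constructor
  · exact part1 I J hIo hIc hJo hJc hpos L hL B hxy hyy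
  · intro z w hz hw x hx y hy
    exact part2 z w hz hw x y (hpos x hx y hy)
end

section
/- Let m ≥ 1, let I, J ⊆ ℝ be open intervals, and let L : I × J → ℝ^{m+1} be a smooth map satisfying the partial differential equations ∂²L/∂y² = −√2·tanh((x+y)/√2)·∂L/∂y and ∂²L/∂x∂y = −sech²((x+y)/√2)·L on I × J. Then there exists a smooth curve z : I → ℝ^{m+1} such that L(x,y) = z(x)·tanh((x+y)/√2) − z'(x)/√2 for all (x,y) ∈ I × J. -/
lemma aux_tanh (x : ℝ) : HasDerivAt Real.tanh ((Real.cosh x ^ 2)⁻¹) x := by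
  have h := (Real.hasDerivAt_sinh x).div (Real.hasDerivAt_cosh x) (Real.cosh_pos x).ne'
  have e1 : Real.tanh = fun y => Real.sinh y / Real.cosh y :=
    funext fun y => Real.tanh_eq_sinh_div_cosh y
  rw [e1]
  refine h.congr_deriv ?_
  have h2 := Real.cosh_sq_sub_sinh_sq x
  have h3 := (Real.cosh_pos x).ne'
  field_simp
  linarith

lemma aux_const {E : Type*} [NormedAddCommGroup E] [NormedSpace ℝ E] {s : Set ℝ}
    (hs : Convex ℝ s) {F : ℝ → E} (hF : ∀ x ∈ s, HasDerivAt F 0 x)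
    {a b : ℝ} (ha : a ∈ s) (hb : b ∈ s) : F a = F b := by
  have h := Convex.norm_image_sub_le_of_norm_hasDerivWithin_le (f' := fun _ => (0:E)) (C := 0)
      (fun x hx => (hF x hx).hasDerivWithinAt) (fun x _ => by simp) hs ha hb
  have h0 : F b - F a = 0 := by
    have := norm_le_zero_iff.1 (by simpa using h)
    simpa using this
  exact (sub_eq_zero.1 h0).symm

noncomputable def sech (t : ℝ) : ℝ := 1 / Real.cosh t

theorem stmt_12 (m : ℕ) (hm : 1 ≤ m) (I J : Set ℝ)
    (hIo : IsOpen I) (hIc : I.OrdConnected) (hJo : IsOpen J) (hJc : J.OrdConnected)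
    (L : ℝ → ℝ → Fin (m + 1) → ℝ)
    (hL : ContDiffOn ℝ (⊤ : ℕ∞) (fun p : ℝ × ℝ => L p.1 p.2) (I ×ˢ J))
    (hyy : ∀ x ∈ I, ∀ y ∈ J,
      pd2 (pd2 L) x y = (-(Real.sqrt 2 * Real.tanh ((x + y) / Real.sqrt 2))) • pd2 L x y)
    (hxy : ∀ x ∈ I, ∀ y ∈ J,
      pd1 (pd2 L) x y = (-(sech ((x + y) / Real.sqrt 2)) ^ 2) • L x y) :
    ∃ z : ℝ → Fin (m + 1) → ℝ, ContDiffOn ℝ (⊤ : ℕ∞) z I ∧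
      ∀ x ∈ I, ∀ y ∈ J,
        L x y = Real.tanh ((x + y) / Real.sqrt 2) • z x - (Real.sqrt 2)⁻¹ • deriv z x := by
  rcases Set.eq_empty_or_nonempty J with hJ | ⟨y₀, hy₀⟩
  · exact ⟨0, contDiffOn_const, fun x _ y hy => by simp [hJ] at hy⟩
  set c := Real.sqrt 2 with hcdef
  have hc0 : (0:ℝ) < c := Real.sqrt_pos.2 two_pos
  have hc : c ≠ 0 := hc0.ne'
  have hc2 : c * c = 2 := Real.mul_self_sqrt (by norm_num)
  set f : ℝ × ℝ → Fin (m+1) → ℝ := fun p => L p.1 p.2 with hfdef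
  set U : Set (ℝ × ℝ) := I ×ˢ J with hUdef
  have hU : IsOpen U := hIo.prod hJo
  have convJ : Convex ℝ J := hJc.convex
  -- differentiability of f on U
  have hfd : ∀ x ∈ I, ∀ y ∈ J, DifferentiableAt ℝ f (x, y) := fun x hx y hy =>
    (hL.contDiffAt (hU.mem_nhds ⟨hx, hy⟩)).differentiableAt (by simp)
  -- P = partial derivative in second variable, via fderiv
  set P : ℝ → ℝ → Fin (m+1) → ℝ := fun x y => (fderiv ℝ f (x, y)) (0, 1) with hPdef
  -- lemma A
  have hA : ∀ x ∈ I, ∀ y ∈ J,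
      HasDerivAt (fun t => L x t) (P x y) y ∧ pd2 L x y = P x y := by
    intro x hx y hy
    have hcurve : HasDerivAt (fun t => ((x, t) : ℝ × ℝ)) ((0:ℝ), (1:ℝ)) y :=
      (hasDerivAt_const y x).prodMk (hasDerivAt_id y)
    have h : HasDerivAt (fun t => L x t) ((fderiv ℝ f (x, y)) (0, 1)) y :=
      (hfd x hx y hy).hasFDerivAt.comp_hasDerivAt y hcurve
    exact ⟨h, h.deriv⟩
  -- smoothness of fderiv
  have hfderiv : ContDiffOn ℝ (⊤ : ℕ∞) (fun p : ℝ × ℝ => fderiv ℝ f p) U :=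
    hL.fderiv_of_isOpen hU (by simp)
  have hPsm : ContDiffOn ℝ (⊤ : ℕ∞) (fun p : ℝ × ℝ => P p.1 p.2) U := by
    have := hfderiv.clm_apply (contDiffOn_const (c := ((0:ℝ), (1:ℝ))))
    simpa using this
  have hPd : ∀ x ∈ I, ∀ y ∈ J, DifferentiableAt ℝ (fun p : ℝ × ℝ => P p.1 p.2) (x, y) :=
    fun x hx y hy => (hPsm.contDiffAt (hU.mem_nhds ⟨hx, hy⟩)).differentiableAt (by simp)
  -- derivatives of pd2 L in each variable
  have hA2 : ∀ x ∈ I, ∀ y ∈ J, HasDerivAt (fun t => pd2 L x t) (pd2 (pd2 L) x y) y := by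
    intro x hx y hy
    have hdiff : DifferentiableAt ℝ (fun t => P x t) y :=
      (hPd x hx y hy).comp (g := fun p : ℝ × ℝ => P p.1 p.2) (f := fun t => (x, t)) y
        ((differentiableAt_const x).prodMk differentiableAt_id)
    have heq : (fun t => pd2 L x t) =ᶠ[nhds y] fun t => P x t := by
      filter_upwards [hJo.mem_nhds hy] with t ht
      exact (hA x hx t ht).2
    have : DifferentiableAt ℝ (fun t => pd2 L x t) y := hdiff.congr_of_eventuallyEq heq
    exact this.hasDerivAt
  have hA1 : ∀ x ∈ I, ∀ y ∈ J, HasDerivAt (fun t => pd2 L t y) (pd1 (pd2 L) x y) x := by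
    intro x hx y hy
    have hdiff : DifferentiableAt ℝ (fun t => P t y) x :=
      (hPd x hx y hy).comp (g := fun p : ℝ × ℝ => P p.1 p.2) (f := fun t => (t, y)) x
        (differentiableAt_id.prodMk (differentiableAt_const y))
    have heq : (fun t => pd2 L t y) =ᶠ[nhds x] fun t => P t y := by
      filter_upwards [hIo.mem_nhds hx] with t ht
      exact (hA t ht y hy).2
    have : DifferentiableAt ℝ (fun t => pd2 L t y) x := hdiff.congr_of_eventuallyEq heq
    exact this.hasDerivAt
  -- W
  set W : ℝ → Fin (m+1) → ℝ := fun x => (Real.cosh ((x + y₀) / c)) ^ 2 • pd2 L x y₀ with hWdef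
  -- Step B : constancy in y
  have hB : ∀ x ∈ I, ∀ y ∈ J, (Real.cosh ((x + y) / c)) ^ 2 • pd2 L x y = W x := by
    intro x hx y hy
    have key : ∀ t ∈ J, HasDerivAt
        (fun t => (Real.cosh ((x + t) / c)) ^ 2 • pd2 L x t) 0 t := by
      intro t ht
      have hu : HasDerivAt (fun s => (x + s) / c) (1 / c) t := by
        simpa using ((hasDerivAt_id t).const_add x).div_const c
      have hcosh : HasDerivAt (fun s => Real.cosh ((x + s) / c))
          (Real.sinh ((x + t) / c) * (1 / c)) t :=
        (Real.hasDerivAt_cosh _).comp t hu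
      have hsq := hcosh.pow 2
      have hF := hsq.smul (hA2 x hx t ht)
      rw [hyy x hx t ht] at hF
      refine hF.congr_deriv (Eq.symm ?_)
      have hcp := (Real.cosh_pos ((x + t) / c)).ne'
      simp only [Pi.pow_apply]
      match_scalars
      rw [Real.tanh_eq_sinh_div_cosh]
      field_simp
      linear_combination (Real.cosh ((x + t) / c) * Real.sinh ((x + t) / c)) * hc2
    exact aux_const convJ key hy hy₀
  -- g
  set g : ℝ → Fin (m+1) → ℝ :=
    fun x => L x y₀ - (c * Real.tanh ((x + y₀) / c)) • W x with hgdef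
  -- Step C
  have hC : ∀ x ∈ I, ∀ y ∈ J,
      L x y = (c * Real.tanh ((x + y) / c)) • W x + g x := by
    intro x hx y hy
    have key : ∀ t ∈ J, HasDerivAt
        (fun t => L x t - (c * Real.tanh ((x + t) / c)) • W x) 0 t := by
      intro t ht
      have hu : HasDerivAt (fun s => (x + s) / c) (1 / c) t := by
        simpa using ((hasDerivAt_id t).const_add x).div_const c
      have htanh : HasDerivAt (fun s => Real.tanh ((x + s) / c))
          ((Real.cosh ((x + t) / c) ^ 2)⁻¹ * (1 / c)) t :=
        (aux_tanh _).comp t hu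
      have hmul := (htanh.const_mul c).smul_const (W x)
      have hG := ((hA x hx t ht).1).sub hmul
      refine hG.congr_deriv (Eq.symm ?_)
      have hpd : pd2 L x t = (Real.cosh ((x + t) / c) ^ 2)⁻¹ • W x := by
        rw [← hB x hx t ht, smul_smul]
        have hcp := pow_ne_zero 2 (Real.cosh_pos ((x + t) / c)).ne'
        rw [inv_mul_cancel₀ hcp, one_smul]
      rw [(hA x hx t ht).2.symm, hpd]
      rw [mul_comm c, mul_assoc, one_div, inv_mul_cancel₀ hc, mul_one]
      abel
    have := aux_const convJ key hy hy₀
    have h2 : L x y - (c * Real.tanh ((x + y) / c)) • W x = g x := this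
    linear_combination (norm := module) h2
  -- Step D : derivative of W
  have hD : ∀ x ∈ I, HasDerivAt W (-g x) x := by
    intro x hx
    have hu : HasDerivAt (fun s => (s + y₀) / c) (1 / c) x := by
      simpa using ((hasDerivAt_id x).add_const y₀).div_const c
    have hcosh : HasDerivAt (fun s => Real.cosh ((s + y₀) / c))
        (Real.sinh ((x + y₀) / c) * (1 / c)) x :=
      (Real.hasDerivAt_cosh _).comp x hu
    have hsq := hcosh.pow 2
    have hW : HasDerivAt W
        (Real.cosh ((x + y₀) / c) ^ 2 • pd1 (pd2 L) x y₀ +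
          ((2:ℕ) * Real.cosh ((x + y₀) / c) ^ (2 - 1) *
            (Real.sinh ((x + y₀) / c) * (1 / c))) • pd2 L x y₀) x :=
      hsq.smul (hA1 x hx y₀ hy₀)
    convert hW using 1
    have hpd : pd2 L x y₀ = (Real.cosh ((x + y₀) / c) ^ 2)⁻¹ • W x := by
      rw [← hB x hx y₀ hy₀, smul_smul]
      have hcp := pow_ne_zero 2 (Real.cosh_pos ((x + y₀) / c)).ne'
      rw [inv_mul_cancel₀ hcp, one_smul]
    have hLx : L x y₀ = (c * Real.tanh ((x + y₀) / c)) • W x + g x := by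
      rw [hgdef]; module
    rw [hxy x hx y₀ hy₀, hpd, hLx]
    have hcp := (Real.cosh_pos ((x + y₀) / c)).ne'
    simp only [sech, smul_add, smul_smul]
    match_scalars
    · field_simp
    · rw [Real.tanh_eq_sinh_div_cosh]
      field_simp
      linear_combination (Real.sinh ((x + y₀) / c) *
        Real.cosh ((x + y₀) / c)) * hc2
  -- final
  refine ⟨fun x => c • W x, ?_, ?_⟩
  · have hsc : ContDiff ℝ (⊤ : ℕ∞) (fun x : ℝ => c * Real.cosh ((x + y₀) / c) ^ 2) :=
      contDiff_const.mul ((Real.contDiff_cosh.comp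
        ((contDiff_id.add contDiff_const).div_const c)).pow 2)
    have hclm : ContDiffOn ℝ (⊤ : ℕ∞) (fun x : ℝ => P x y₀) I := by
      have hcomp : ContDiffOn ℝ (⊤ : ℕ∞) (fun x : ℝ => fderiv ℝ f (x, y₀)) I :=
        hfderiv.comp ((contDiff_id.prodMk contDiff_const).contDiffOn)
          (fun x hx => ⟨hx, hy₀⟩)
      exact hcomp.clm_apply contDiffOn_const
    have := (hsc.contDiffOn.smul hclm)
    refine this.congr fun x hx => ?_
    show c • (Real.cosh ((x + y₀) / c) ^ 2 • pd2 L x y₀) = _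
    rw [(hA x hx y₀ hy₀).2, smul_smul]
    rfl
  · intro x hx y hy
    have hz : HasDerivAt (fun x => c • W x) (c • (-g x)) x := (hD x hx).const_smul c
    rw [hz.deriv, hC x hx y hy]
    match_scalars <;> (field_simp; try ring)
end
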